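/- Let K be a compact metric space, F : K → ℝ, and a < b reals such that K_n(F; a, b) = ∅ for some n ∈ ℕ, where K₀ = K and K_{i+1} = closure(K_i ∩ [F ≤ a]) ∩ closure(K_i ∩ [F ≥ b]). Then the set D = ⋃_{i=1}^n ( closure([F ≤ a] ∩ K_{i−1}) \ closure([F ≥ b] ∩ K_{i−1}) ) satisfies [F ≤ a] ⊆ D and D ∩ [F ≥ b] = ∅, and D is a finite union of differences of closed sets. -/
import Mathlib


/-- The separation derived sets `K_i(F; a, b)` (finite stages):
`K₀ = K`, `K_{i+1} = closure(K_i ∩ [F ≤ a]) ∩ closure(K_i ∩ [F ≥ b])`. -/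
def sepDerivedSet {K : Type*} [TopologicalSpace K] (F : K → ℝ) (a b : ℝ) : ℕ → Set K
  | 0 => Set.univ
  | i + 1 => closure (sepDerivedSet F a b i ∩ {k | F k ≤ a}) ∩
      closure (sepDerivedSet F a b i ∩ {k | b ≤ F k})

lemma sepDerivedSet_isClosed {K : Type*} [TopologicalSpace K] (F : K → ℝ) (a b : ℝ) :
    ∀ i, IsClosed (sepDerivedSet F a b i)
  | 0 => isClosed_univ
  | i + 1 => IsClosed.inter isClosed_closure isClosed_closure

lemma sepDerivedSet_mem_of {K : Type*} [TopologicalSpace K] (F : K → ℝ) (a b : ℝ)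
    (k : K) (hk : F k ≤ a) :
    ∀ n, (∀ i < n, k ∈ sepDerivedSet F a b i →
      k ∈ closure (sepDerivedSet F a b i ∩ {k | b ≤ F k})) → k ∈ sepDerivedSet F a b n := by
  intro n
  induction n with
  | zero => intro _; trivial
  | succ m ih =>
    intro h
    have hkm : k ∈ sepDerivedSet F a b m := ih fun i hi => h i (Nat.lt_succ_of_lt hi)
    exact ⟨subset_closure ⟨hkm, hk⟩, h m (Nat.lt_succ_self m) hkm⟩

/-- If `K_n(F; a, b) = ∅`, then
`D = ⋃_{i=1}^n closure([F ≤ a] ∩ K_{i−1}) \ closure([F ≥ b] ∩ K_{i−1})`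
contains `[F ≤ a]`, is disjoint from `[F ≥ b]`, and is a finite union of
differences of closed sets. -/
theorem stmt6 {K : Type*} [MetricSpace K] [CompactSpace K] (F : K → ℝ)
    (a b : ℝ) (hab : a < b) (n : ℕ) (hn : sepDerivedSet F a b n = ∅)
    (D : Set K)
    (hD : D = ⋃ i ∈ Finset.range n,
      closure ({k | F k ≤ a} ∩ sepDerivedSet F a b i) \
        closure ({k | b ≤ F k} ∩ sepDerivedSet F a b i)) :
    {k | F k ≤ a} ⊆ D ∧ D ∩ {k | b ≤ F k} = ∅ ∧
    ∃ (m : ℕ) (A B : Fin m → Set K),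
      (∀ i, IsClosed (A i)) ∧ (∀ i, IsClosed (B i)) ∧ D = ⋃ i, A i \ B i := by
  refine ⟨?_, ?_, ?_⟩
  · intro k hk
    by_contra hkD
    have : k ∈ sepDerivedSet F a b n := by
      apply sepDerivedSet_mem_of F a b k hk
      intro i hi hki
      by_contra hcl
      apply hkD
      rw [hD]
      refine Set.mem_biUnion (Finset.mem_range.mpr hi) ⟨subset_closure ⟨hk, hki⟩, ?_⟩
      rwa [Set.inter_comm]
    rw [hn] at this
    exact this
  · ext k
    simp only [Set.mem_inter_iff, Set.mem_empty_iff_false, iff_false, not_and]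
    intro hkD hkb
    rw [hD] at hkD
    simp only [Set.mem_iUnion, Set.mem_diff, Finset.mem_range, exists_prop] at hkD
    obtain ⟨i, hi, hmem, hnot⟩ := hkD
    have hki : k ∈ sepDerivedSet F a b i := by
      have := closure_mono (Set.inter_subset_right : {k | F k ≤ a} ∩ sepDerivedSet F a b i ⊆ _) hmem
      rwa [(sepDerivedSet_isClosed F a b i).closure_eq] at this
    exact hnot (subset_closure ⟨hkb, hki⟩)
  · refine ⟨n, fun i => closure ({k | F k ≤ a} ∩ sepDerivedSet F a b i),
      fun i => closure ({k | b ≤ F k} ∩ sepDerivedSet F a b i),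
      fun _ => isClosed_closure, fun _ => isClosed_closure, ?_⟩
    rw [hD]
    ext k
    simp only [Set.mem_iUnion, Finset.mem_range]
    constructor
    · rintro ⟨i, hi, h⟩; exact ⟨⟨i, hi⟩, h⟩
    · rintro ⟨i, h⟩; exact ⟨i, i.2, h⟩
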